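/- Let λ > 0 and α : ℝ → ℝ continuous with compact support in [0,∞). The unique solution u of u'' = -λ²u - α vanishing at infinity (with u' also vanishing at infinity) satisfies u(0) = -λ⁻¹ ∫₀^∞ sin(λτ) α(τ) dτ. -/

import Mathlib

open MeasureTheory Real Set Filter

/-!
The function `E t = sin (l t) u'(t) - l cos (l t) u(t)` has derivative `sin (l t) (u'' + l² u)`,
which the equation turns into `-sin (l t) α(t)`. Since `E` vanishes at infinity together with
`u` and `u'`, and `E 0 = -l u(0)`, integrating `E'` over `[0, ∞)` gives `l u(0) = -∫ sin (l τ) α τ`.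
-/

section
variable {l : ℝ} {u v : ℝ → ℝ}

theorem hasDerivAt_sin_mul_sub_cos_mul {t v' : ℝ} (hu : HasDerivAt u (v t) t)
    (hv : HasDerivAt v v' t) :
    HasDerivAt (fun s => sin (l * s) * v s - l * cos (l * s) * u s)
      (sin (l * t) * (v' + l ^ 2 * u t)) t := by
  have hlin : HasDerivAt (fun s => l * s) l t := by simpa using (hasDerivAt_id t).const_mul l
  refine ((hlin.sin.fun_mul hv).fun_sub ((hlin.cos.const_mul l).fun_mul hu)).congr_deriv ?_
  ring

theorem tendsto_sin_mul_sub_cos_mul_atTop (hu : Tendsto u atTop (nhds 0))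
    (hv : Tendsto v atTop (nhds 0)) :
    Tendsto (fun s => sin (l * s) * v s - l * cos (l * s) * u s) atTop (nhds 0) := by
  have hsin : IsBoundedUnder (· ≤ ·) atTop (norm ∘ fun s => sin (l * s)) :=
    isBoundedUnder_of ⟨1, fun s => by simpa using abs_sin_le_one (l * s)⟩
  have hcos : IsBoundedUnder (· ≤ ·) atTop (norm ∘ fun s => l * cos (l * s)) :=
    isBoundedUnder_of ⟨|l|, fun s => by
      simpa [abs_mul] using mul_le_mul_of_nonneg_left (abs_cos_le_one (l * s)) (abs_nonneg l)⟩
  simpa using (isBoundedUnder_le_mul_tendsto_zero hsin hv).sub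
    (isBoundedUnder_le_mul_tendsto_zero hcos hu)

theorem mul_eq_integral_Ioi_sin_mul_deriv_deriv_add (hu : Differentiable ℝ u)
    (hu' : Differentiable ℝ (deriv u)) (hu0 : Tendsto u atTop (nhds 0))
    (hu0' : Tendsto (deriv u) atTop (nhds 0))
    (hint : IntegrableOn (fun t => sin (l * t) * (deriv (deriv u) t + l ^ 2 * u t)) (Ioi 0)) :
    l * u 0 = ∫ t in Ioi 0, sin (l * t) * (deriv (deriv u) t + l ^ 2 * u t) := by
  rw [integral_Ioi_of_hasDerivAt_of_tendsto' (m := 0)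
    (fun t _ => hasDerivAt_sin_mul_sub_cos_mul (hu t).hasDerivAt (hu' t).hasDerivAt) hint
    (tendsto_sin_mul_sub_cos_mul_atTop hu0 hu0')]
  simp

end

theorem stmt2_general (l : ℝ) (hl : 0 < l) (α : ℝ → ℝ) (hcont : Continuous α)
    (hsupp : HasCompactSupport α)
    (u : ℝ → ℝ) (hu2 : ContDiff ℝ 2 u)
    (hueq : ∀ t, deriv (deriv u) t = -l ^ 2 * u t - α t)
    (hu0 : Tendsto u atTop (nhds 0)) (hu0' : Tendsto (deriv u) atTop (nhds 0)) :
    u 0 = -l⁻¹ * ∫ τ in Ici (0 : ℝ), Real.sin (l * τ) * α τ := by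
  have hrhs : ∀ t, sin (l * t) * (deriv (deriv u) t + l ^ 2 * u t) = -(sin (l * t) * α t) := by
    intro t
    rw [hueq]
    ring
  have hint : Integrable fun t => sin (l * t) * α t :=
    ((continuous_sin.comp (continuous_const_mul l)).mul hcont).integrable_of_hasCompactSupport
      hsupp.mul_left
  have hlu0 := mul_eq_integral_Ioi_sin_mul_deriv_deriv_add (l := l) (hu2.differentiable two_ne_zero)
    hu2.differentiable_deriv_two hu0 hu0' (by simpa only [hrhs] using hint.fun_neg.integrableOn)
  simp only [hrhs, integral_neg, ← integral_Ici_eq_integral_Ioi] at hlu0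
  field_simp
  linarith

theorem stmt2 (l : ℝ) (hl : 0 < l) (α : ℝ → ℝ) (hcont : Continuous α)
    (hsupp : HasCompactSupport α) (hneg : ∀ t < 0, α t = 0)
    (u : ℝ → ℝ) (hu2 : ContDiff ℝ 2 u)
    (hueq : ∀ t, deriv (deriv u) t = -l ^ 2 * u t - α t)
    (hu0 : Tendsto u atTop (nhds 0)) (hu0' : Tendsto (deriv u) atTop (nhds 0)) :
    u 0 = -l⁻¹ * ∫ τ in Ici (0 : ℝ), Real.sin (l * τ) * α τ :=
  stmt2_general l hl α hcont hsupp u hu2 hueq hu0 hu0'
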